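/- In a finite MDP with two reward functions R and R' satisfying R'(s,a) = R(s,a) + γ Φ(s') − Φ(s) in expectation over s' ~ P(·|s,a) for a potential function Φ : S → ℝ, every policy's Q-functions satisfy Q'^π(s,a) = Q^π(s,a) + (expected shaping correction), and the set of optimal policies is unchanged (potential-based reward shaping preserves optimality). -/
import Mathlib

/-- A self-mapping contraction identity on a finite space forces the function to be zero. -/
lemma shaping_contraction_zero {S A : Type*} [Fintype S] [Fintype A]
    (P : S → A → S → ℝ) (hP0 : ∀ s a s', 0 ≤ P s a s')
    (hP1 : ∀ s a, ∑ s', P s a s' = 1)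
    (π : S → A → ℝ) (hπ0 : ∀ s a, 0 ≤ π s a) (hπ1 : ∀ s, ∑ a, π s a = 1)
    (γ : ℝ) (hγ0 : 0 ≤ γ) (hγ1 : γ < 1)
    (D : S → A → ℝ)
    (hD : ∀ s a, D s a = γ * ∑ s', P s a s' * ∑ a', π s' a' * D s' a') :
    ∀ s a, D s a = 0 := by
  intro s a
  have hSne : Nonempty S := ⟨s⟩
  have hAne : Nonempty A := ⟨a⟩
  have huniv : (Finset.univ : Finset (S × A)).Nonempty := Finset.univ_nonempty
  set M : ℝ := Finset.univ.sup' huniv (fun p : S × A => |D p.1 p.2|) with hM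
  have hle : ∀ s' a', |D s' a'| ≤ M := by
    intro s' a'
    exact Finset.le_sup' (fun p : S × A => |D p.1 p.2|) (Finset.mem_univ (s', a'))
  have hM0 : 0 ≤ M := le_trans (abs_nonneg _) (hle s a)
  -- bound: M ≤ γ * M
  obtain ⟨p, -, hp⟩ := Finset.exists_mem_eq_sup' huniv (fun p : S × A => |D p.1 p.2|)
  have key2 : |D p.1 p.2| ≤ γ * M := by
    rw [hD p.1 p.2, abs_mul, abs_of_nonneg hγ0]
    apply mul_le_mul_of_nonneg_left _ hγ0
    calc |∑ s', P p.1 p.2 s' * ∑ a', π s' a' * D s' a'|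
        ≤ ∑ s', |P p.1 p.2 s' * ∑ a', π s' a' * D s' a'| := Finset.abs_sum_le_sum_abs _ _
      _ ≤ ∑ s', P p.1 p.2 s' * M := by
          apply Finset.sum_le_sum
          intro s' _
          rw [abs_mul, abs_of_nonneg (hP0 _ _ _)]
          apply mul_le_mul_of_nonneg_left _ (hP0 _ _ _)
          calc |∑ a', π s' a' * D s' a'| ≤ ∑ a', |π s' a' * D s' a'| :=
                Finset.abs_sum_le_sum_abs _ _
            _ ≤ ∑ a', π s' a' * M := by
                apply Finset.sum_le_sum
                intro a' _
                rw [abs_mul, abs_of_nonneg (hπ0 _ _)]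
                exact mul_le_mul_of_nonneg_left (hle _ _) (hπ0 _ _)
            _ = M := by rw [← Finset.sum_mul, hπ1, one_mul]
      _ = M := by rw [← Finset.sum_mul, hP1, one_mul]
  have key : M ≤ γ * M := le_of_eq_of_le (hM.trans hp) key2
  have hMz : M = 0 := by nlinarith
  have := hle s a
  rw [hMz] at this
  have := abs_nonpos_iff.mp this
  exact this

/-- Potential-based reward shaping. In a finite MDP with discount
γ ∈ [0,1), if R'(s,a) = R(s,a) + γ·E_{s'~P(·|s,a)}[Φ(s')] − Φ(s) for a potential
Φ : S → ℝ, then for every policy π the Q-functions (characterized by their Bellman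
equations) satisfy Q'^π(s,a) = Q^π(s,a) − Φ(s) (the expected shaping correction),
and the set of optimal policies is unchanged (optimality measured by the induced
state-value functions V^π(s) = ∑_a π(a|s) Q^π(s,a)). -/
theorem potential_based_shaping_preserves_optimality
    {S A : Type*} [Fintype S] [Fintype A]
    (P : S → A → S → ℝ) (hP0 : ∀ s a s', 0 ≤ P s a s')
    (hP1 : ∀ s a, ∑ s', P s a s' = 1)
    (γ : ℝ) (hγ0 : 0 ≤ γ) (hγ1 : γ < 1)
    (R R' : S → A → ℝ) (Φ : S → ℝ)
    (hshape : ∀ s a, R' s a = R s a + γ * (∑ s', P s a s' * Φ s') - Φ s)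
    (Q Q' : (S → A → ℝ) → S → A → ℝ)
    (hQ : ∀ π : S → A → ℝ, (∀ s a, 0 ≤ π s a) → (∀ s, ∑ a, π s a = 1) →
      ∀ s a, Q π s a = R s a + γ * ∑ s', P s a s' * ∑ a', π s' a' * Q π s' a')
    (hQ' : ∀ π : S → A → ℝ, (∀ s a, 0 ≤ π s a) → (∀ s, ∑ a, π s a = 1) →
      ∀ s a, Q' π s a = R' s a + γ * ∑ s', P s a s' * ∑ a', π s' a' * Q' π s' a') :
    (∀ π : S → A → ℝ, (∀ s a, 0 ≤ π s a) → (∀ s, ∑ a, π s a = 1) →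
      ∀ s a, Q' π s a = Q π s a - Φ s) ∧
    ({π : S → A → ℝ | (∀ s a, 0 ≤ π s a) ∧ (∀ s, ∑ a, π s a = 1) ∧
        ∀ π' : S → A → ℝ, (∀ s a, 0 ≤ π' s a) → (∀ s, ∑ a, π' s a = 1) →
          ∀ s, ∑ a, π' s a * Q π' s a ≤ ∑ a, π s a * Q π s a}
      = {π : S → A → ℝ | (∀ s a, 0 ≤ π s a) ∧ (∀ s, ∑ a, π s a = 1) ∧
        ∀ π' : S → A → ℝ, (∀ s a, 0 ≤ π' s a) → (∀ s, ∑ a, π' s a = 1) →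
          ∀ s, ∑ a, π' s a * Q' π' s a ≤ ∑ a, π s a * Q' π s a}) := by
  have main : ∀ π : S → A → ℝ, (∀ s a, 0 ≤ π s a) → (∀ s, ∑ a, π s a = 1) →
      ∀ s a, Q' π s a = Q π s a - Φ s := by
    intro π hπ0 hπ1
    set D : S → A → ℝ := fun s a => Q' π s a - Q π s a + Φ s with hDdef
    have hD : ∀ s a, D s a = γ * ∑ s', P s a s' * ∑ a', π s' a' * D s' a' := by
      intro s a
      have h1 := hQ π hπ0 hπ1 s a
      have h2 := hQ' π hπ0 hπ1 s a
      have expand : ∀ s', ∑ a', π s' a' * D s' a'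
          = (∑ a', π s' a' * Q' π s' a') - (∑ a', π s' a' * Q π s' a') + Φ s' := by
        intro s'
        simp only [hDdef]
        rw [← Finset.sum_sub_distrib]
        have : ∑ a', π s' a' * (Q' π s' a' - Q π s' a' + Φ s')
            = ∑ a', ((π s' a' * Q' π s' a' - π s' a' * Q π s' a') + π s' a' * Φ s') := by
          apply Finset.sum_congr rfl; intro a' _; ring
        rw [this, Finset.sum_add_distrib, ← Finset.sum_mul, hπ1, one_mul,
          Finset.sum_sub_distrib]
      have hrhs : ∑ s', P s a s' * ∑ a', π s' a' * D s' a'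
          = (∑ s', P s a s' * ∑ a', π s' a' * Q' π s' a')
            - (∑ s', P s a s' * ∑ a', π s' a' * Q π s' a')
            + ∑ s', P s a s' * Φ s' := by
        rw [← Finset.sum_sub_distrib, ← Finset.sum_add_distrib]
        apply Finset.sum_congr rfl
        intro s' _
        rw [expand s']
        ring
      simp only [hDdef]
      rw [hrhs, h1, h2, hshape s a]
      ring
    have := shaping_contraction_zero P hP0 hP1 π hπ0 hπ1 γ hγ0 hγ1 D hD
    intro s a
    have h := this s a
    simp only [hDdef] at h
    linarith
  have val : ∀ π : S → A → ℝ, (∀ s a, 0 ≤ π s a) → (∀ s, ∑ a, π s a = 1) →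
      ∀ s, ∑ a, π s a * Q' π s a = (∑ a, π s a * Q π s a) - Φ s := by
    intro π h0 h1 s
    have e : ∑ a, π s a * Q' π s a = ∑ a, (π s a * Q π s a - π s a * Φ s) := by
      apply Finset.sum_congr rfl
      intro a _
      rw [main π h0 h1 s a]; ring
    rw [e, Finset.sum_sub_distrib, ← Finset.sum_mul, h1 s, one_mul]
  refine ⟨main, ?_⟩
  ext π
  simp only [Set.mem_setOf_eq]
  constructor
  · rintro ⟨h0, h1, hopt⟩
    refine ⟨h0, h1, fun π' h0' h1' s => ?_⟩
    rw [val π' h0' h1' s, val π h0 h1 s]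
    linarith [hopt π' h0' h1' s]
  · rintro ⟨h0, h1, hopt⟩
    refine ⟨h0, h1, fun π' h0' h1' s => ?_⟩
    have := hopt π' h0' h1' s
    rw [val π' h0' h1' s, val π h0 h1 s] at this
    linarith
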